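/- Let N ≥ 1, let α_1,…,α_N, β_1,…,β_N be complex numbers with |α_r| < 1 and 0 < |β_r| < 1 for all r, the β_r pairwise distinct, and let l_1 < l_2 < … < l_N be integers with l_N ≤ N−1. Then for every j ∈ {1,…,N}, every integer s_2 with 0 ≤ s_2 ≤ N, and every x_2 ∈ ℕ: (1/2πi)∮_{|z|=1} h_{l_1,…,l_N}(1/β; 1/β_j↦1/z) · ∏_{ℓ=s_2+1}^{N}(1−α_ℓ z)^{−1} · ∏_{r=1}^{N}(1−β_r/z)^{−1} · z^{x_2−1} dz = ∏_{r=1}^{s_2}(1−α_r β_j) · β_j^{x_2} · h_{l_1,…,l_N}(1/β) / [∏_{r=1}^N(1−α_r β_j) · ∏_{s=1, s≠j}^N (1−β_s/β_j)]. -/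

import Mathlib

/-!
Since `l_N ≤ N - 1`, the function `z ↦ z^{N-1} h(1/β; 1/β_j ↦ 1/z)` is a polynomial `P`, and
`∏_r (1 - β_r/z)⁻¹ = z^N / ∏_r (z - β_r)`. On the unit circle the integrand is therefore
`g z / ∏_r (z - β_r)` with `g z = P z · ∏_ℓ (1 - α_ℓ z)⁻¹ · z^{x₂}` holomorphic on the closed
disc. Partial fractions and Cauchy's formula turn the integral into
`∑_r g(β_r) / ∏_{s ≠ r} (β_r - β_s)`, and `P(β_r) = 0` for `r ≠ j` because the determinant then
has two equal columns, so only the term `r = j` survives.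
-/

/-- The alternating determinant `h_{κ(1),…,κ(N)}(β) = det(β_j^{κ_i})_{i,j=1}^N`, where the
sequences `κ` (integer exponents) and `β` are 1-indexed. -/
noncomputable def hdet (N : ℕ) (κ : ℕ → ℤ) (β : ℕ → ℂ) : ℂ :=
  Matrix.det (Matrix.of fun i j : Fin N => β ((j : ℕ) + 1) ^ κ ((i : ℕ) + 1))

/-- The determinant `h_{κ(1),…,κ(N)}(β; β_{j₀} ↦ z)`: the matrix `(β_j^{κ_i})` with the
`j₀`-th column replaced by `(z^{κ_i})_i`. -/
noncomputable def hdetSub (N : ℕ) (κ : ℕ → ℤ) (β : ℕ → ℂ) (j₀ : ℕ) (z : ℂ) : ℂ :=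
  Matrix.det (Matrix.of fun i j : Fin N =>
    if (j : ℕ) + 1 = j₀ then z ^ κ ((i : ℕ) + 1) else β ((j : ℕ) + 1) ^ κ ((i : ℕ) + 1))

open Finset Metric Complex Lagrange Real

theorem prod_one_sub_div {ι K : Type*} [Field K] (s : Finset ι) (v : ι → K) {w : K}
    (hw : w ≠ 0) :
    ∏ i ∈ s, (1 - v i / w) = (∏ i ∈ s, (w - v i)) / w ^ s.card := by
  rw [← prod_const, ← prod_div_distrib]
  exact prod_congr rfl fun i _ => by field_simp

theorem prod_Icc_mul_prod_Icc_succ {M : Type*} [CommMonoid M] (f : ℕ → M) {m n k : ℕ}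
    (hmn : m ≤ n + 1) (hnk : n ≤ k) :
    (∏ i ∈ Icc m n, f i) * ∏ i ∈ Icc (n + 1) k, f i = ∏ i ∈ Icc m k, f i := by
  rw [← Ico_add_one_right_eq_Icc, ← Ico_add_one_right_eq_Icc, ← Ico_add_one_right_eq_Icc]
  exact prod_Ico_consecutive f hmn (by omega)

theorem prod_inv_sub_eq_sum_nodalWeight {F ι : Type*} [Field F] [DecidableEq ι] {s : Finset ι}
    {v : ι → F} (hvs : Set.InjOn v s) (hs : s.Nonempty) {x : F} (hx : ∀ i ∈ s, x ≠ v i) :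
    ∏ i ∈ s, (x - v i)⁻¹ = ∑ i ∈ s, nodalWeight s v i * (x - v i)⁻¹ := by
  have h := eval_interpolate_not_at_node 1 hx
  simp only [interpolate_one hvs hs, Polynomial.eval_one, Pi.one_apply, mul_one,
    eval_nodal] at h
  rw [prod_inv_distrib]
  exact (eq_inv_of_mul_eq_one_right h.symm).symm

theorem nodalWeight_eq_inv_pow_mul_prod {ι K : Type*} [Field K] [DecidableEq ι] {s : Finset ι}
    {v : ι → K} {i : ι} (hi : i ∈ s) (hvi : v i ≠ 0) :
    nodalWeight s v i = (v i ^ (#s - 1) * ∏ r ∈ s.erase i, (1 - v r / v i))⁻¹ := by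
  rw [nodalWeight, prod_one_sub_div _ _ hvi, card_erase_of_mem hi, prod_inv_distrib]
  field_simp

theorem one_sub_mul_ne_zero_of_norm_lt {𝕜 : Type*} [NormedDivisionRing 𝕜] {a z : 𝕜}
    (ha : ‖a‖ < 1) (hz : ‖z‖ ≤ 1) : 1 - a * z ≠ 0 := by
  refine sub_ne_zero.2 fun h => ?_
  have : ‖a * z‖ < 1 := by
    rw [norm_mul]
    nlinarith [norm_nonneg a, norm_nonneg z]
  simp [← h] at this

theorem circleIntegral_prod_inv_sub_mul {ι : Type*} [DecidableEq ι] {s : Finset ι} {v : ι → ℂ}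
    (hvs : Set.InjOn v s) (hs : s.Nonempty) {c : ℂ} {R : ℝ} (hv : ∀ i ∈ s, v i ∈ ball c R)
    {g : ℂ → ℂ} (hg : DifferentiableOn ℂ g (closedBall c R)) :
    (∮ z in C(c, R), (∏ i ∈ s, (z - v i)⁻¹) * g z) =
      2 * π * I * ∑ i ∈ s, nodalWeight s v i * g (v i) := by
  obtain ⟨i₀, hi₀⟩ := hs
  have hR : 0 ≤ R := dist_nonneg.trans (mem_ball.1 (hv i₀ hi₀)).le
  have hpole : ∀ z ∈ sphere c R, ∀ i ∈ s, z ≠ v i := fun z hz i hi h =>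
    (mem_ball.1 (hv i hi)).ne (h ▸ mem_sphere.1 hz)
  have hcont : ∀ i ∈ s,
      CircleIntegrable (fun z => nodalWeight s v i * ((z - v i)⁻¹ * g z)) c R := fun i hi =>
    ContinuousOn.circleIntegrable hR <| continuousOn_const.mul <|
      ((continuousOn_id.sub continuousOn_const).inv₀ fun z hz =>
        sub_ne_zero.2 (hpole z hz i hi)).mul (hg.continuousOn.mono sphere_subset_closedBall)
  calc (∮ z in C(c, R), (∏ i ∈ s, (z - v i)⁻¹) * g z)
      = ∮ z in C(c, R), ∑ i ∈ s, nodalWeight s v i * ((z - v i)⁻¹ * g z) :=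
        circleIntegral.integral_congr hR fun z hz => by
          simp only [prod_inv_sub_eq_sum_nodalWeight hvs ⟨i₀, hi₀⟩ (hpole z hz), sum_mul,
            mul_assoc]
    _ = ∑ i ∈ s, nodalWeight s v i * ∮ z in C(c, R), (z - v i)⁻¹ * g z := by
        rw [circleIntegral.integral_fun_sum hcont]
        simp only [circleIntegral.integral_const_mul]
    _ = 2 * π * I * ∑ i ∈ s, nodalWeight s v i * g (v i) := by
        rw [mul_sum]
        refine sum_congr rfl fun i hi => ?_
        have hcauchy := hg.circleIntegral_sub_inv_smul (hv i hi)
        simp only [smul_eq_mul] at hcauchy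
        rw [hcauchy, mul_left_comm]

theorem Differentiable.det_updateCol {𝕜 E n : Type*} [NontriviallyNormedField 𝕜]
    [CompleteSpace 𝕜] [NormedAddCommGroup E] [NormedSpace 𝕜 E] [Fintype n] [DecidableEq n]
    (B : Matrix n n 𝕜) (j : n) {c : E → n → 𝕜} (hc : Differentiable 𝕜 c) :
    Differentiable 𝕜 fun z => (B.updateCol j (c z)).det := by
  simp only [← Matrix.cramer_apply]
  exact differentiable_pi.1
    ((LinearMap.toContinuousLinearMap B.cramer).differentiable.comp hc) j

noncomputable def hdetMatrix (N : ℕ) (κ : ℕ → ℤ) (γ : ℕ → ℂ) : Matrix (Fin N) (Fin N) ℂ :=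
  Matrix.of fun i j => γ ((j : ℕ) + 1) ^ κ ((i : ℕ) + 1)

section hdetSub

variable {N : ℕ} {κ : ℕ → ℤ} {γ : ℕ → ℂ}

theorem hdetSub_eq_det_updateCol (j₀ : Fin N) (z : ℂ) :
    hdetSub N κ γ (j₀ + 1) z = ((hdetMatrix N κ γ).updateCol j₀ fun i => z ^ κ (i + 1)).det := by
  unfold hdetSub hdetMatrix
  congr 1
  ext i j
  simp [Matrix.updateCol_apply, Fin.ext_iff]

theorem hdetSub_self (j₀ : ℕ) : hdetSub N κ γ j₀ (γ j₀) = hdet N κ γ := by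
  unfold hdetSub hdet
  congr 1
  ext i j
  simp only [Matrix.of_apply]
  split_ifs with h <;> simp [h]

theorem hdetSub_eq_zero {j₀ t : ℕ} (hj₀ : j₀ ∈ Icc 1 N) (ht : t ∈ Icc 1 N) (htj : t ≠ j₀) :
    hdetSub N κ γ j₀ (γ t) = 0 := by
  rw [mem_Icc] at hj₀ ht
  refine Matrix.det_zero_of_column_eq (i := ⟨j₀ - 1, by omega⟩) (j := ⟨t - 1, by omega⟩)
    (by simp [Fin.ext_iff]; omega) fun k => ?_
  simp only [Matrix.of_apply]
  rw [if_pos (by omega), if_neg (by omega), Nat.sub_add_cancel ht.1]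

noncomputable def hdetSubPoly (N : ℕ) (κ : ℕ → ℤ) (γ : ℕ → ℂ) (m : ℕ) (j₀ : Fin N)
    (z : ℂ) : ℂ :=
  ((hdetMatrix N κ γ).updateCol j₀ fun i => z ^ ((m : ℤ) - κ (i + 1)).toNat).det

theorem differentiable_hdetSubPoly (m : ℕ) (j₀ : Fin N) :
    Differentiable ℂ (hdetSubPoly N κ γ m j₀) :=
  Differentiable.det_updateCol _ j₀ <| differentiable_pi.2 fun _ => differentiable_pow _

theorem hdetSubPoly_eq {m : ℕ} (hκ : ∀ i : Fin N, κ (i + 1) ≤ m) (j₀ : Fin N) {z : ℂ}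
    (hz : z ≠ 0) :
    hdetSubPoly N κ γ m j₀ z = z ^ m * hdetSub N κ γ (j₀ + 1) z⁻¹ := by
  rw [hdetSub_eq_det_updateCol, ← Matrix.det_updateCol_smul, hdetSubPoly]
  congr 2
  funext i
  rw [Pi.smul_apply, smul_eq_mul, ← zpow_natCast, Int.toNat_of_nonneg (by linarith [hκ i]),
    inv_zpow', ← zpow_natCast, ← zpow_add₀ hz, sub_eq_add_neg]

end hdetSub

theorem circleIntegral_hdetSub_inv_mul {N : ℕ} {κ : ℕ → ℤ} {β : ℕ → ℂ}
    (hκ : ∀ i : Fin N, κ (i + 1) ≤ (N - 1 : ℕ)) (hβ : ∀ t ∈ Icc 1 N, β t ∈ ball 0 1)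
    (hβ₀ : ∀ t ∈ Icc 1 N, β t ≠ 0) (hinj : Set.InjOn β (Icc 1 N)) (j₀ : Fin N) {f : ℂ → ℂ}
    (hf : DifferentiableOn ℂ f (closedBall 0 1)) (x : ℕ) :
    (1 / (2 * π * I)) * (∮ z in C(0, 1), hdetSub N κ (fun t => (β t)⁻¹) (j₀ + 1) z⁻¹ * f z *
        (∏ t ∈ Icc 1 N, (1 - β t / z)⁻¹) * z ^ ((x : ℤ) - 1)) =
      f (β (j₀ + 1)) * β (j₀ + 1) ^ x * hdet N κ (fun t => (β t)⁻¹) /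
        ∏ s ∈ (Icc 1 N).erase (j₀ + 1), (1 - β s / β (j₀ + 1)) := by
  have hj₀ : (j₀ : ℕ) + 1 ∈ Icc 1 N := mem_Icc.2 ⟨by omega, j₀.isLt⟩
  set g : ℂ → ℂ := fun z => hdetSubPoly N κ (fun t => (β t)⁻¹) (N - 1) j₀ z * f z * z ^ x
  have hg : DifferentiableOn ℂ g (closedBall 0 1) :=
    ((differentiable_hdetSubPoly _ j₀).differentiableOn.mul hf).mul
      (differentiable_pow x).differentiableOn
  have hintegrand : Set.EqOn (fun z => hdetSub N κ (fun t => (β t)⁻¹) (j₀ + 1) z⁻¹ * f z *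
        (∏ t ∈ Icc 1 N, (1 - β t / z)⁻¹) * z ^ ((x : ℤ) - 1))
      (fun z => (∏ t ∈ Icc 1 N, (z - β t)⁻¹) * g z) (sphere 0 1) := fun z hz => by
    have hz₀ : z ≠ 0 := ne_zero_of_mem_sphere one_ne_zero ⟨z, hz⟩
    have hzN : z ^ N = z ^ (N - 1) * z := (pow_sub_one_mul j₀.pos.ne' z).symm
    simp only [g, hdetSubPoly_eq hκ j₀ hz₀, prod_inv_distrib, prod_one_sub_div _ _ hz₀,
      Nat.card_Icc, Nat.add_sub_cancel, zpow_sub_one₀ hz₀, zpow_natCast, hzN]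
    field_simp
  have hpoles : ∀ t ∈ Icc 1 N, t ≠ j₀ + 1 → g (β t) = 0 := fun t ht htj => by
    have : hdetSub N κ (fun t => (β t)⁻¹) (j₀ + 1) (β t)⁻¹ = 0 := hdetSub_eq_zero hj₀ ht htj
    simp only [g, hdetSubPoly_eq hκ j₀ (hβ₀ t ht), this, mul_zero, zero_mul]
  have hself : hdetSub N κ (fun t => (β t)⁻¹) (j₀ + 1) (β (j₀ + 1))⁻¹ =
      hdet N κ (fun t => (β t)⁻¹) := hdetSub_self _
  have hβj := hβ₀ _ hj₀
  rw [circleIntegral.integral_congr zero_le_one hintegrand,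
    circleIntegral_prod_inv_sub_mul hinj ⟨_, hj₀⟩ hβ hg,
    sum_eq_single_of_mem _ hj₀ fun t ht htj => by rw [hpoles t ht htj, mul_zero],
    nodalWeight_eq_inv_pow_mul_prod hj₀ hβj, Nat.card_Icc, Nat.add_sub_cancel]
  simp only [g, hdetSubPoly_eq hκ j₀ hβj, hself]
  generalize ∏ s ∈ (Icc 1 N).erase (j₀ + 1), (1 - β s / β (j₀ + 1)) = Q
  field_simp

theorem integral_evaluation_general (N : ℕ) (α β : ℕ → ℂ)
    (hα : ∀ i, 1 ≤ i → i ≤ N → ‖α i‖ < 1)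
    (hβ : ∀ i, 1 ≤ i → i ≤ N → 0 < ‖β i‖ ∧ ‖β i‖ < 1)
    (hdist : ∀ i j, 1 ≤ i → i ≤ N → 1 ≤ j → j ≤ N → i ≠ j → β i ≠ β j)
    (lam : ℕ → ℤ) (hlam : ∀ i j, 1 ≤ i → i < j → j ≤ N → lam i < lam j)
    (hlamN : lam N ≤ (N : ℤ) - 1)
    (j : ℕ) (hj : 1 ≤ j) (hjN : j ≤ N) (s₂ : ℕ) (hs₂ : s₂ ≤ N) (x₂ : ℕ) :
    (1 / (2 * (Real.pi : ℂ) * Complex.I)) *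
        (∮ z in C(0, 1),
          hdetSub N lam (fun t => (β t)⁻¹) j z⁻¹ *
            (∏ l ∈ Finset.Icc (s₂ + 1) N, (1 - α l * z)⁻¹) *
            (∏ t ∈ Finset.Icc 1 N, (1 - β t / z)⁻¹) * z ^ ((x₂ : ℤ) - 1))
      = (∏ i ∈ Finset.Icc 1 s₂, (1 - α i * β j)) * β j ^ x₂ *
          hdet N lam (fun t => (β t)⁻¹) /
          ((∏ t ∈ Finset.Icc 1 N, (1 - α t * β j)) *
            ∏ s ∈ (Finset.Icc 1 N).erase j, (1 - β s / β j)) := by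
  have hjS : j ∈ Icc 1 N := mem_Icc.2 ⟨hj, hjN⟩
  obtain ⟨jI, rfl⟩ : ∃ jI : Fin N, (jI : ℕ) + 1 = j := ⟨⟨j - 1, by omega⟩, by simp; omega⟩
  have hβ₀ : ∀ t ∈ Icc 1 N, β t ≠ 0 := fun t ht =>
    norm_pos_iff.1 (hβ t (mem_Icc.1 ht).1 (mem_Icc.1 ht).2).1
  have hβball : ∀ t ∈ Icc 1 N, β t ∈ ball 0 1 := fun t ht =>
    mem_ball_zero_iff.2 (hβ t (mem_Icc.1 ht).1 (mem_Icc.1 ht).2).2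
  have hinj : Set.InjOn β (Icc 1 N) := fun s hs t ht => by
    simp only [coe_Icc, Set.mem_Icc] at hs ht
    exact not_imp_not.1 (hdist s t hs.1 hs.2 ht.1 ht.2)
  have hlam_le : ∀ i : Fin N, lam (i + 1) ≤ (N - 1 : ℕ) := fun i => by
    rcases (show (i : ℕ) + 1 ≤ N from i.isLt).eq_or_lt with h | h
    · rw [h]; omega
    · have := hlam _ N (by omega) h le_rfl; omega
  have hαz : ∀ l ∈ Icc 1 N, ∀ z : ℂ, ‖z‖ ≤ 1 → 1 - α l * z ≠ 0 := fun l hl _ =>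
    one_sub_mul_ne_zero_of_norm_lt (hα l (mem_Icc.1 hl).1 (mem_Icc.1 hl).2)
  have hA : DifferentiableOn ℂ (fun z => ∏ l ∈ Icc (s₂ + 1) N, (1 - α l * z)⁻¹)
      (closedBall 0 1) :=
    DifferentiableOn.fun_finsetProd fun l hl =>
      (by fun_prop : Differentiable ℂ _).differentiableOn.inv fun z hz =>
        hαz l (Icc_subset_Icc_left (by omega) hl) z (by simpa using hz)
  have hP₁ : ∏ i ∈ Icc 1 s₂, (1 - α i * β (jI + 1)) ≠ 0 := prod_ne_zero_iff.2 fun i hi =>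
    hαz i (Icc_subset_Icc_right hs₂ hi) _ (mem_ball_zero_iff.1 (hβball _ hjS)).le
  rw [circleIntegral_hdetSub_inv_mul hlam_le hβball hβ₀ hinj jI hA,
    ← prod_Icc_mul_prod_Icc_succ (fun t => 1 - α t * β (jI + 1)) (Nat.le_add_left 1 s₂) hs₂,
    prod_inv_distrib]
  generalize ∏ i ∈ Icc 1 s₂, (1 - α i * β (jI + 1)) = P₁ at hP₁ ⊢
  generalize ∏ l ∈ Icc (s₂ + 1) N, (1 - α l * β (jI + 1)) = P₂
  generalize ∏ s ∈ (Icc 1 N).erase (jI + 1), (1 - β s / β (jI + 1)) = Q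
  linear_combination (-(β (jI + 1) ^ x₂ * hdet N lam (fun t => (β t)⁻¹) / (P₂ * Q))) *
    mul_inv_cancel₀ hP₁

/-- the integral evaluation (3.16) of the paper. -/
theorem integral_evaluation (N : ℕ) (hN : 1 ≤ N) (α β : ℕ → ℂ)
    (hα : ∀ i, 1 ≤ i → i ≤ N → ‖α i‖ < 1)
    (hβ : ∀ i, 1 ≤ i → i ≤ N → 0 < ‖β i‖ ∧ ‖β i‖ < 1)
    (hdist : ∀ i j, 1 ≤ i → i ≤ N → 1 ≤ j → j ≤ N → i ≠ j → β i ≠ β j)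
    (lam : ℕ → ℤ) (hlam : ∀ i j, 1 ≤ i → i < j → j ≤ N → lam i < lam j)
    (hlamN : lam N ≤ (N : ℤ) - 1)
    (j : ℕ) (hj : 1 ≤ j) (hjN : j ≤ N) (s₂ : ℕ) (hs₂ : s₂ ≤ N) (x₂ : ℕ) :
    (1 / (2 * (Real.pi : ℂ) * Complex.I)) *
        (∮ z in C(0, 1),
          hdetSub N lam (fun t => (β t)⁻¹) j z⁻¹ *
            (∏ l ∈ Finset.Icc (s₂ + 1) N, (1 - α l * z)⁻¹) *
            (∏ t ∈ Finset.Icc 1 N, (1 - β t / z)⁻¹) * z ^ ((x₂ : ℤ) - 1))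
      = (∏ i ∈ Finset.Icc 1 s₂, (1 - α i * β j)) * β j ^ x₂ *
          hdet N lam (fun t => (β t)⁻¹) /
          ((∏ t ∈ Finset.Icc 1 N, (1 - α t * β j)) *
            ∏ s ∈ (Finset.Icc 1 N).erase j, (1 - β s / β j)) :=
  integral_evaluation_general N α β hα hβ hdist lam hlam hlamN j hj hjN s₂ hs₂ x₂
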